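/- arXiv:1109.0218 — 5 statements merged into one kernel-verified Lean document; each statement's English description precedes it below -/
import Mathlib

section
/- For any natural number p ≥ 2, Σ_{v=1}^{⌊(p-2)/2⌋} 4·3^{v-1} · Σ_{r=1}^{p-2v} 3^{r-1} ≤ (3^p - 4(3^{p/2} - 1) - 1)/3, and the limit as p → ∞ of [(3^p - 4·3^{p/2} + 3)/3 · (3/2)(3^{p-1} - 1)] / (2·3^p - 1)^2 equals 1/24. -/
/-!
The inner sum is geometric, `(3 ^ (p - 2v) - 1) / 2`, so the double sum telescopes to
`3 ^ (p - 1) - 3 ^ (p - 1 - V) - 3 ^ V + 1` with `V = ⌊(p - 2) / 2⌋`. Writing `p = 2V + 2 + e`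
and `s = 3 ^ (e / 2) ≥ 1`, the inequality reduces to `4 s ≤ 3 s² + 1`, i.e. `(3 s - 1)(s - 1) ≥ 0`.

For the limit, with `t = 3 ^ (p / 2) = √3 ^ p → ∞` the expression is a rational function of `t`
of degree `4` over degree `4`, continuous in `t⁻¹` near `0`, with leading coefficients
`(1/3)(1/2)` over `4`.
-/

open Filter Finset Topology

theorem sum_Icc_one_comp_sub_one {M : Type*} [AddCommMonoid M] (f : ℕ → M) (m : ℕ) :
    ∑ r ∈ Icc 1 m, f (r - 1) = ∑ i ∈ range m, f i := by
  rw [← Ico_add_one_right_eq_Icc, sum_Ico_eq_sum_range]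
  simp

theorem sum_Icc_one_three_pow_sub_one (m : ℕ) :
    ∑ r ∈ Icc 1 m, (3 : ℝ) ^ (r - 1) = (3 ^ m - 1) / 2 := by
  rw [sum_Icc_one_comp_sub_one (fun i => (3 : ℝ) ^ i), geom_sum_eq (by norm_num)]
  norm_num

theorem sum_Icc_three_pow_mul_sum_Icc_three_pow (V p : ℕ) (h : 2 * V ≤ p) :
    ∑ v ∈ Icc 1 V, 4 * (3 : ℝ) ^ (v - 1) * ∑ r ∈ Icc 1 (p - 2 * v), (3 : ℝ) ^ (r - 1) =
      3 ^ (p - 1) - 3 ^ (p - 1 - V) - 3 ^ V + 1 := by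
  induction V with
  | zero => simp
  | succ W ih =>
    obtain ⟨k, rfl⟩ : ∃ k, p = 2 * W + 2 + k := ⟨p - (2 * W + 2), by omega⟩
    rw [sum_Icc_succ_top (by omega), ih (by omega), sum_Icc_one_three_pow_sub_one,
      show 2 * W + 2 + k - 2 * (W + 1) = k by omega,
      show 2 * W + 2 + k - 1 - W = W + 1 + k by omega,
      show 2 * W + 2 + k - 1 - (W + 1) = W + k by omega, Nat.add_sub_cancel]
    ring

theorem four_mul_three_rpow_half_le {x : ℝ} (hx : 0 ≤ x) :
    4 * (3 : ℝ) ^ (x / 2) ≤ 3 * 3 ^ x + 1 := by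
  have hs : 1 ≤ (3 : ℝ) ^ (x / 2) := Real.one_le_rpow (by norm_num) (by positivity)
  have hsq : (3 : ℝ) ^ x = (3 ^ (x / 2)) ^ 2 := by
    rw [← Real.rpow_natCast, ← Real.rpow_mul (by norm_num)]
    norm_num
  nlinarith

theorem sum_Icc_three_pow_mul_sum_Icc_three_pow_le (V p : ℕ) (h : 2 * V + 2 ≤ p) :
    ∑ v ∈ Icc 1 V, 4 * (3 : ℝ) ^ (v - 1) * ∑ r ∈ Icc 1 (p - 2 * v), (3 : ℝ) ^ (r - 1) ≤
      ((3 : ℝ) ^ p - 4 * ((3 : ℝ) ^ ((p : ℝ) / 2) - 1) - 1) / 3 := by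
  rw [sum_Icc_three_pow_mul_sum_Icc_three_pow V p (by omega)]
  obtain ⟨e, rfl⟩ : ∃ e, p = 2 * V + 2 + e := ⟨p - (2 * V + 2), by omega⟩
  have hhalf : (3 : ℝ) ^ (((2 * V + 2 + e : ℕ) : ℝ) / 2) = 3 ^ (V + 1) * 3 ^ ((e : ℝ) / 2) := by
    rw [← Real.rpow_natCast, ← Real.rpow_add (by norm_num)]
    push_cast
    ring_nf
  rw [hhalf, show 2 * V + 2 + e - 1 - V = V + 1 + e by omega,
    show 2 * V + 2 + e - 1 = 2 * V + 1 + e by omega]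
  have key := mul_le_mul_of_nonneg_left (four_mul_three_rpow_half_le (Nat.cast_nonneg (α := ℝ) e))
    (by positivity : (0 : ℝ) ≤ 3 ^ V)
  rw [Real.rpow_natCast] at key
  simp only [pow_add, pow_succ, pow_mul] at key ⊢
  linarith

theorem rational_eq_of_inv (t : ℝ) (ht : 1 ≤ t) :
    (t ^ 2 - 4 * t + 3) / 3 * (3 / 2 * (t ^ 2 / 3 - 1)) / (2 * t ^ 2 - 1) ^ 2 =
      (1 - 4 * t⁻¹ + 3 * t⁻¹ ^ 2) / 3 * (3 / 2 * (1 / 3 - t⁻¹ ^ 2)) / (2 - t⁻¹ ^ 2) ^ 2 := by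
  have : 2 * t ^ 2 - 1 ≠ 0 := by nlinarith
  field_simp

theorem tendsto_rational_of_tendsto_atTop {α : Type*} {l : Filter α} {f : α → ℝ}
    (hf : Tendsto f l atTop) :
    Tendsto (fun a => (f a ^ 2 - 4 * f a + 3) / 3 * (3 / 2 * (f a ^ 2 / 3 - 1)) /
      (2 * f a ^ 2 - 1) ^ 2) l (𝓝 (1 / 24)) := by
  let g : ℝ → ℝ := fun u => (1 - 4 * u + 3 * u ^ 2) / 3 * (3 / 2 * (1 / 3 - u ^ 2)) / (2 - u ^ 2) ^ 2
  have hg : Tendsto g (𝓝 0) (𝓝 (1 / 24)) := by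
    have hcont : ContinuousAt g 0 := by fun_prop (disch := norm_num)
    convert hcont.tendsto using 2
    norm_num [g]
  refine (hg.comp (tendsto_inv_atTop_zero.comp hf)).congr' ?_
  filter_upwards [hf.eventually_ge_atTop 1] with a ha
  exact (rational_eq_of_inv (f a) ha).symm

theorem stmt_3 :
    (∀ p : ℕ, 2 ≤ p →
      ∑ v ∈ Finset.Icc 1 ((p - 2) / 2),
          (4 * (3 : ℝ) ^ (v - 1) * ∑ r ∈ Finset.Icc 1 (p - 2 * v), (3 : ℝ) ^ (r - 1)) ≤
        ((3 : ℝ) ^ (p : ℕ) - 4 * ((3 : ℝ) ^ ((p : ℝ) / 2) - 1) - 1) / 3) ∧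
    Tendsto (fun p : ℕ =>
        (((3 : ℝ) ^ (p : ℕ) - 4 * (3 : ℝ) ^ ((p : ℝ) / 2) + 3) / 3 *
            (3 / 2 * ((3 : ℝ) ^ ((p : ℤ) - 1) - 1))) /
          (2 * (3 : ℝ) ^ (p : ℕ) - 1) ^ 2)
      atTop (nhds (1 / 24)) := by
  refine ⟨fun p hp => sum_Icc_three_pow_mul_sum_Icc_three_pow_le _ p (by omega), ?_⟩
  have hsqrt : (1 : ℝ) < √3 := by rw [Real.lt_sqrt zero_le_one]; norm_num
  refine (tendsto_rational_of_tendsto_atTop (tendsto_pow_atTop_atTop_of_one_lt hsqrt)).congr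
    fun p => ?_
  have hhalf : (3 : ℝ) ^ ((p : ℝ) / 2) = √3 ^ p := by
    rw [Real.sqrt_eq_rpow, ← Real.rpow_natCast, ← Real.rpow_mul (by norm_num)]
    ring_nf
  have hpow : (3 : ℝ) ^ p = (√3 ^ p) ^ 2 := by
    rw [← pow_mul, mul_comm, pow_mul, Real.sq_sqrt (by norm_num)]
  rw [hhalf, zpow_sub₀ (by norm_num), zpow_natCast, zpow_one, hpow]
end

section
/- The limit as n → ∞ of c_n = 2^n·(!n)^2·((n-1)/(n(2n-1)^2))^n is 0. -/
open Filter

lemma numDerangements_le_factorial (n : ℕ) : numDerangements n ≤ n.factorial := by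
  rw [← card_derangements_fin_eq_numDerangements]
  calc Fintype.card (derangements (Fin n)) ≤ Fintype.card (Equiv.Perm (Fin n)) :=
        Fintype.card_le_of_injective Subtype.val Subtype.val_injective
    _ = n.factorial := by rw [Fintype.card_perm, Fintype.card_fin]

theorem stmt_8 :
    Tendsto (fun n : ℕ =>
        (2 : ℝ) ^ n * (numDerangements n : ℝ) ^ 2 *
          (((n : ℝ) - 1) / (n * (2 * n - 1) ^ 2)) ^ n)
      atTop (nhds 0) := by
  have h2 : Tendsto (fun n : ℕ => ((1:ℝ)/2)^n) atTop (nhds 0) :=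
    tendsto_pow_atTop_nhds_zero_of_lt_one (by norm_num) (by norm_num)
  refine squeeze_zero' ?_ ?_ h2
  · filter_upwards [eventually_ge_atTop 1] with n hn
    have hn1 : (1:ℝ) ≤ n := by exact_mod_cast hn
    have hx : (0:ℝ) ≤ ((n : ℝ) - 1) / (n * (2 * n - 1) ^ 2) := by
      apply div_nonneg (by linarith)
      positivity
    positivity
  · filter_upwards [eventually_ge_atTop 1] with n hn
    have hn1 : (1:ℝ) ≤ n := by exact_mod_cast hn
    have hx : (0:ℝ) ≤ ((n : ℝ) - 1) / (n * (2 * n - 1) ^ 2) := by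
      apply div_nonneg (by linarith)
      positivity
    have hd : (numDerangements n : ℝ) ≤ (n:ℝ)^n := by
      calc (numDerangements n : ℝ) ≤ (n.factorial : ℝ) := by
            exact_mod_cast numDerangements_le_factorial n
        _ ≤ (n:ℝ)^n := by exact_mod_cast Nat.factorial_le_pow n
    have hdnn : (0:ℝ) ≤ (numDerangements n : ℝ) := by positivity
    have hkey : 2 * (n:ℝ)^2 * (((n : ℝ) - 1) / (n * (2 * n - 1) ^ 2)) ≤ 1/2 := by
      rw [mul_div_assoc', div_le_div_iff₀ (by nlinarith) (by norm_num)]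
      nlinarith
    calc (2 : ℝ) ^ n * (numDerangements n : ℝ) ^ 2 *
          (((n : ℝ) - 1) / (n * (2 * n - 1) ^ 2)) ^ n
        ≤ (2 : ℝ) ^ n * ((n:ℝ)^n) ^ 2 *
          (((n : ℝ) - 1) / (n * (2 * n - 1) ^ 2)) ^ n := by gcongr
      _ = (2 * (n:ℝ)^2 * (((n : ℝ) - 1) / (n * (2 * n - 1) ^ 2))) ^ n := by
          rw [mul_pow, mul_pow, ← pow_mul, ← pow_mul, Nat.mul_comm n 2]
      _ ≤ ((1:ℝ)/2) ^ n := by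
          apply pow_le_pow_left₀ (by positivity) hkey
end

section
/- Let a, b be real numbers, and let p_1, p_2 be real polynomials with deg p_1 ≤ deg p_2 − 2 and p_2 having positive leading coefficient. Then lim_{m→∞} ∏_{k=1}^{m} (1 + a/m + bk/m² + p_1(k)/p_2(m)) = e^{a + b/2}. -/
open Filter Finset Polynomial

/-!
Write the factors as `1 + x m k`. Since `deg p₁ + 2 ≤ deg p₂`, the polynomial term is
`O(1/m²)` uniformly in `k ≤ m`, so `|x m k| = O(1/m)`. Then `log (1 + x) = x + O(x²)` gives
`∑ₖ log (1 + x m k) = ∑ₖ x m k + O(1/m)`, and `∑ₖ x m k = a + b (m + 1) / (2m) + O(1/m)`.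
-/

theorem Real.abs_log_one_add_sub_self_le {t : ℝ} (ht : |t| ≤ 1 / 2) :
    |Real.log (1 + t) - t| ≤ 2 * t ^ 2 := by
  have h := Real.abs_log_sub_add_sum_range_le (x := -t) (by rw [abs_neg]; linarith) 1
  rw [abs_neg, sub_neg_eq_add] at h
  simp only [range_one, sum_singleton, zero_add, pow_one, Nat.cast_zero, div_one] at h
  calc |Real.log (1 + t) - t| = |-t + Real.log (1 + t)| := by rw [neg_add_eq_sub]
    _ ≤ |t| ^ 2 / (1 - |t|) := h
    _ ≤ |t| ^ 2 / (1 / 2) := by gcongr; linarith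
    _ = 2 * t ^ 2 := by rw [sq_abs]; ring

theorem Polynomial.exists_abs_eval_le_mul_pow (p : ℝ[X]) :
    ∃ A ≥ 0, ∀ x y : ℝ, 1 ≤ x → |y| ≤ x → |p.eval y| ≤ A * x ^ p.natDegree := by
  refine ⟨∑ i ∈ range (p.natDegree + 1), |p.coeff i|, by positivity, fun x y hx hy => ?_⟩
  rw [eval_eq_sum_range, sum_mul]
  refine (abs_sum_le_sum_abs _ _).trans (sum_le_sum fun i hi => ?_)
  rw [abs_mul, abs_pow]
  gcongr
  calc |y| ^ i ≤ x ^ i := by gcongr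
    _ ≤ x ^ p.natDegree := pow_le_pow_right₀ hx (Nat.lt_succ_iff.mp (mem_range.mp hi))

theorem Polynomial.exists_abs_eval_div_eval_le {p q : ℝ[X]} {j : ℕ} (hq : q ≠ 0)
    (hdeg : p.natDegree + j ≤ q.natDegree) :
    ∃ C ≥ 0, ∀ᶠ x in atTop, ∀ y : ℝ, |y| ≤ x → |p.eval y / q.eval x| ≤ C / x ^ j := by
  obtain ⟨A, hA, hpA⟩ := p.exists_abs_eval_le_mul_pow
  have hdeg' : (X ^ (p.natDegree + j) : ℝ[X]).degree ≤ q.degree := by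
    rw [degree_X_pow, degree_eq_natDegree hq]
    exact_mod_cast hdeg
  obtain ⟨c, hc0, hc⟩ := (isBigO_atTop_of_degree_le _ _ hdeg').exists_pos
  refine ⟨A * c, by positivity, ?_⟩
  filter_upwards [hc.bound, eventually_ge_atTop 1] with x hcx hx y hy
  simp only [eval_pow, eval_X, Real.norm_eq_abs] at hcx
  rw [abs_of_pos (by positivity)] at hcx
  have hqx : 0 < |q.eval x| :=
    pos_of_mul_pos_right ((by positivity : (0 : ℝ) < x ^ (p.natDegree + j)).trans_le hcx) hc0.le
  rw [abs_div, div_le_div_iff₀ hqx (by positivity)]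
  calc |p.eval y| * x ^ j ≤ A * x ^ p.natDegree * x ^ j := by gcongr; exact hpA x y hx hy
    _ = A * x ^ (p.natDegree + j) := by ring
    _ ≤ A * (c * |q.eval x|) := by gcongr
    _ = A * c * |q.eval x| := by ring

theorem tendsto_prod_one_add {α ι : Type*} {l : Filter α} {s : α → Finset ι} {x : α → ι → ℝ}
    {L : ℝ} (hsmall : ∀ᶠ m in l, ∀ k ∈ s m, |x m k| ≤ 1 / 2)
    (hsum : Tendsto (fun m => ∑ k ∈ s m, x m k) l (nhds L))
    (hsq : Tendsto (fun m => ∑ k ∈ s m, x m k ^ 2) l (nhds 0)) :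
    Tendsto (fun m => ∏ k ∈ s m, (1 + x m k)) l (nhds (Real.exp L)) := by
  have herr : Tendsto (fun m => ∑ k ∈ s m, (Real.log (1 + x m k) - x m k)) l (nhds 0) := by
    refine squeeze_zero_norm' ?_ (by simpa using hsq.const_mul 2)
    filter_upwards [hsmall] with m hm
    rw [mul_sum]
    exact (abs_sum_le_sum_abs _ _).trans
      (sum_le_sum fun k hk => Real.abs_log_one_add_sub_self_le (hm k hk))
  have hlog : Tendsto (fun m => ∑ k ∈ s m, Real.log (1 + x m k)) l (nhds L) := by
    simpa [sum_sub_distrib] using herr.add hsum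
  refine hlog.rexp.congr' ?_
  filter_upwards [hsmall] with m hm
  rw [Real.exp_sum]
  refine prod_congr rfl fun k hk => Real.exp_log ?_
  linarith [neg_abs_le (x m k), hm k hk]

section TriangularArrays

variable {ι : Type*} {s : ℕ → Finset ι}

theorem tendsto_sum_zero_of_abs_le_div (hs : ∀ m, #(s m) ≤ m) {y : ℕ → ι → ℝ}
    {ε : ℕ → ℝ} (hε : Tendsto ε atTop (nhds 0))
    (hy : ∀ᶠ m in atTop, ∀ k ∈ s m, |y m k| ≤ ε m / m) :
    Tendsto (fun m => ∑ k ∈ s m, y m k) atTop (nhds 0) := by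
  refine squeeze_zero_norm' ?_ (by simpa using hε.abs)
  filter_upwards [hy, eventually_ge_atTop 1] with m hm hm1
  have hm0 : (0 : ℝ) < m := by exact_mod_cast hm1
  calc ‖∑ k ∈ s m, y m k‖ ≤ ∑ k ∈ s m, |y m k| := abs_sum_le_sum_abs _ _
    _ ≤ #(s m) • (|ε m| / m) :=
        sum_le_card_nsmul _ _ _ fun k hk => (hm k hk).trans (by gcongr; exact le_abs_self _)
    _ ≤ m * (|ε m| / m) := by rw [nsmul_eq_mul]; gcongr; exact_mod_cast hs m
    _ = |ε m| := by field_simp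

theorem tendsto_prod_one_add_of_abs_le_div (hs : ∀ m, #(s m) ≤ m) {x : ℕ → ι → ℝ} {C L : ℝ}
    (hx : ∀ᶠ m in atTop, ∀ k ∈ s m, |x m k| ≤ C / m)
    (hsum : Tendsto (fun m => ∑ k ∈ s m, x m k) atTop (nhds L)) :
    Tendsto (fun m => ∏ k ∈ s m, (1 + x m k)) atTop (nhds (Real.exp L)) := by
  have hC : Tendsto (fun m : ℕ => C / m) atTop (nhds 0) := tendsto_const_div_atTop_nhds_zero_nat C
  refine tendsto_prod_one_add ?_ hsum ?_
  · filter_upwards [hx, hC.eventually (ge_mem_nhds (by norm_num : (0 : ℝ) < 1 / 2))]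
      with m hm hCm k hk using (hm k hk).trans hCm
  · refine tendsto_sum_zero_of_abs_le_div hs (tendsto_const_div_atTop_nhds_zero_nat (C ^ 2)) ?_
    filter_upwards [hx] with m hm k hk
    calc |x m k ^ 2| = |x m k| ^ 2 := by rw [abs_pow]
      _ ≤ (C / m) ^ 2 := pow_le_pow_left₀ (abs_nonneg _) (hm k hk) 2
      _ = C ^ 2 / m / m := by ring

end TriangularArrays

theorem sum_Icc_one_natCast (m : ℕ) : ∑ k ∈ Icc 1 m, (k : ℝ) = m * (m + 1) / 2 := by
  induction m with
  | zero => simp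
  | succ n ih =>
    rw [sum_Icc_succ_top (by omega), ih]
    push_cast
    ring

theorem abs_div_add_mul_div_sq_le (a b : ℝ) {k m : ℝ} (hk : 0 ≤ k) (hkm : k ≤ m) :
    |a / m + b * k / m ^ 2| ≤ (|a| + |b|) / m := by
  have hm : 0 ≤ m := hk.trans hkm
  have hbk : |b * k / m ^ 2| ≤ |b| / m := by
    rw [abs_div, abs_mul, abs_pow, abs_of_nonneg hk, abs_of_nonneg hm, sq, ← div_div, mul_div_assoc]
    gcongr
    exact mul_le_of_le_one_right (abs_nonneg b) (div_le_one_of_le₀ hkm hm)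
  calc |a / m + b * k / m ^ 2| ≤ |a / m| + |b * k / m ^ 2| := abs_add_le _ _
    _ ≤ |a| / m + |b| / m := by rw [abs_div, abs_of_nonneg hm]; gcongr
    _ = (|a| + |b|) / m := by ring

theorem tendsto_sum_Icc_div_add_mul_div_sq (a b : ℝ) :
    Tendsto (fun m : ℕ => ∑ k ∈ Icc 1 m, (a / m + b * k / (m : ℝ) ^ 2)) atTop
      (nhds (a + b / 2)) := by
  have h : Tendsto (fun m : ℕ => a + b / 2 + (b / 2) / m) atTop (nhds (a + b / 2)) := by
    simpa using tendsto_const_nhds.add (tendsto_const_div_atTop_nhds_zero_nat (b / 2))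
  refine h.congr' ?_
  filter_upwards [eventually_ge_atTop 1] with m hm
  have hm0 : (m : ℝ) ≠ 0 := by positivity
  rw [sum_add_distrib, sum_const, Nat.card_Icc, ← sum_div, ← mul_sum, sum_Icc_one_natCast]
  simp only [add_tsub_cancel_right, nsmul_eq_mul]
  field_simp
  ring

theorem stmt_11_general (a b : ℝ) (p₁ p₂ : Polynomial ℝ)
    (hdeg : p₁.natDegree + 2 ≤ p₂.natDegree) :
    Tendsto (fun m : ℕ =>
        ∏ k ∈ Finset.Icc 1 m,
          (1 + a / m + b * k / (m : ℝ) ^ 2 + p₁.eval (k : ℝ) / p₂.eval (m : ℝ)))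
      atTop (nhds (Real.exp (a + b / 2))) := by
  obtain ⟨C, hC0, hC⟩ := exists_abs_eval_div_eval_le (ne_zero_of_natDegree_gt hdeg) hdeg
  have hratio : ∀ᶠ m : ℕ in atTop, ∀ k ∈ Icc 1 m,
      |p₁.eval (k : ℝ) / p₂.eval (m : ℝ)| ≤ C / m / m := by
    filter_upwards [tendsto_natCast_atTop_atTop.eventually hC] with m hm k hk
    rw [div_div, ← sq]
    exact hm k (by rw [Nat.abs_cast]; exact_mod_cast (mem_Icc.mp hk).2)
  have hbound : ∀ᶠ m : ℕ in atTop, ∀ k ∈ Icc 1 m,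
      |a / m + b * k / (m : ℝ) ^ 2 + p₁.eval (k : ℝ) / p₂.eval (m : ℝ)| ≤ (|a| + |b| + C) / m := by
    filter_upwards [hratio, eventually_ge_atTop 1] with m hm hm1 k hk
    have hkm : (k : ℝ) ≤ m := by exact_mod_cast (mem_Icc.mp hk).2
    calc _ ≤ (|a| + |b|) / m + C / m := (abs_add_le _ _).trans <| add_le_add
          (abs_div_add_mul_div_sq_le a b k.cast_nonneg hkm)
          ((hm k hk).trans (div_le_self (by positivity) (by exact_mod_cast hm1)))
      _ = (|a| + |b| + C) / m := by ring
  have hsum := (tendsto_sum_Icc_div_add_mul_div_sq a b).add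
    (tendsto_sum_zero_of_abs_le_div (by simp) (tendsto_const_div_atTop_nhds_zero_nat C) hratio)
  rw [add_zero] at hsum
  simp only [← sum_add_distrib] at hsum
  simpa only [add_assoc] using tendsto_prod_one_add_of_abs_le_div (by simp) hbound hsum

theorem stmt_11 (a b : ℝ) (p₁ p₂ : Polynomial ℝ)
    (hdeg : p₁.natDegree + 2 ≤ p₂.natDegree) (hlead : 0 < p₂.leadingCoeff) :
    Tendsto (fun m : ℕ =>
        ∏ k ∈ Finset.Icc 1 m,
          (1 + a / m + b * k / (m : ℝ) ^ 2 + p₁.eval (k : ℝ) / p₂.eval (m : ℝ)))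
      atTop (nhds (Real.exp (a + b / 2))) :=
  stmt_11_general a b p₁ p₂ hdeg
end

section
/- For fixed n ≥ 2 and k with 1 ≤ k ≤ n, the limit as p → ∞ of (n-1)/(n(2n-1)^p) · Σ_{x=1}^{p-4} Σ_{y=1}^{p-x-3} 4·((2n-2)(2n-3)^{x-1} - 2(k-1))·((2n-1)^{p-x-y-2} - 1)·((2n-2)(2n-3)^{y-1} - 2(k-1) - 1) equals (4(n-1)^4 - (8k-6)(n-1)^2 + 4k^2 - 6k + 2)/(n(n-1)(2n-1)^2). -/
/-! Put `i = x - 1`, `j = y - 1`, `a = 2n - 1` and `m = p - 4`. After division by `a ^ m` the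
summand becomes `uᵢ vⱼ (1 - a⁻¹ ^ (m - i - j))`, where `uᵢ = ((2n-2)(2n-3)ⁱ - 2(k-1)) / aⁱ` and `vⱼ`
likewise are absolutely summable combinations of geometric sequences. Summed over `i + j < m`, the
main part is a partial sum of the Cauchy product of `u` and `v`, hence tends to `(∑ u)(∑ v)`; the
correction is a coefficient of the Cauchy product of that series with a geometric one, hence tends
to `0`. -/

open Filter Finset Topology

lemma sum_Icc_one_eq_sum_range {M : Type*} [AddCommMonoid M] (m : ℕ) (f : ℕ → M) :
    ∑ x ∈ Icc 1 m, f x = ∑ i ∈ range m, f (i + 1) := by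
  rw [← Ico_add_one_right_eq_Icc, sum_Ico_eq_sum_range, Nat.add_sub_cancel]
  simp only [add_comm 1]

section CauchyProduct

variable {R : Type*} [NormedRing R] [CompleteSpace R] {f g : ℕ → R}

theorem tendsto_sum_range_sum_range_sub_mul (hf : Summable (‖f ·‖)) (hg : Summable (‖g ·‖)) :
    Tendsto (fun n => ∑ i ∈ range n, ∑ j ∈ range (n - i), f i * g j) atTop
      (𝓝 ((∑' i, f i) * ∑' j, g j)) := by
  simp_rw [← sum_range_diag_flip]
  exact (hasSum_sum_range_mul_of_summable_norm hf hg).tendsto_sum_nat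

/-- The `q`-th term is the `q`-th coefficient of an absolutely summable series: the Cauchy product
of the Cauchy product of `f` and `g` with `∑ rⁿ`. -/
theorem tendsto_sum_range_sum_range_sub_mul_mul_pow_zero (hf : Summable (‖f ·‖))
    (hg : Summable (‖g ·‖)) {r : R} (hr : ‖r‖ < 1) :
    Tendsto (fun q => ∑ i ∈ range (q + 1), ∑ j ∈ range (q + 1 - i), f i * g j * r ^ (q - i - j))
      atTop (𝓝 0) := by
  have hfg := summable_norm_sum_mul_range_of_summable_norm hf hg
  refine ((summable_norm_sum_mul_range_of_summable_norm hfg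
    (summable_norm_geometric_of_norm_lt_one hr)).of_norm.tendsto_atTop_zero).congr fun q => ?_
  rw [← sum_range_diag_flip]
  refine sum_congr rfl fun m hm => ?_
  rw [sum_mul]
  refine sum_congr rfl fun k hk => ?_
  rw [mem_range] at hm hk
  congr 2
  omega

end CauchyProduct

theorem tendsto_sum_range_sum_range_mul_pow_sub_one_mul_div_pow {𝕜 : Type*} [NormedField 𝕜]
    [CompleteSpace 𝕜] {a : 𝕜} (ha : 1 < ‖a‖) {x y : ℕ → 𝕜}
    (hx : Summable fun i => ‖x i / a ^ i‖) (hy : Summable fun j => ‖y j / a ^ j‖) :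
    Tendsto (fun n => ∑ i ∈ range n, ∑ j ∈ range (n - i),
        x i * (a ^ (n - i - j) - 1) * y j / a ^ n) atTop
      (𝓝 ((∑' i, x i / a ^ i) * ∑' j, y j / a ^ j)) := by
  have ha0 : a ≠ 0 := norm_pos_iff.mp (zero_lt_one.trans ha)
  have hr : ‖a⁻¹‖ < 1 := by rw [norm_inv]; exact inv_lt_one_of_one_lt₀ ha
  have hmain := (tendsto_add_atTop_iff_nat 1).mpr (tendsto_sum_range_sum_range_sub_mul hx hy)
  have herr := (tendsto_sum_range_sum_range_sub_mul_mul_pow_zero hx hy hr).const_mul a⁻¹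
  rw [mul_zero] at herr
  rw [← tendsto_add_atTop_iff_nat 1, ← sub_zero ((∑' i, x i / a ^ i) * _)]
  refine (hmain.sub herr).congr fun q => ?_
  simp only [mul_sum, ← sum_sub_distrib]
  refine sum_congr rfl fun i hi => sum_congr rfl fun j hj => ?_
  rw [mem_range] at hi hj
  obtain ⟨t, rfl⟩ : ∃ t, q = i + j + t := ⟨q - i - j, by omega⟩
  rw [show i + j + t + 1 - i - j = t + 1 by omega, show i + j + t - i - j = t by omega, inv_pow]
  field_simp
  ring

theorem hasSum_mul_pow_sub_div_pow {a b : ℝ} (A c : ℝ) (ha : 1 < a) (hb : |b| < a) :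
    HasSum (fun i => (A * b ^ i - c) / a ^ i) (A * a / (a - b) - c * a / (a - 1)) := by
  have ha0 : 0 < a := by linarith
  have hba : |b / a| < 1 := by rwa [abs_div, abs_of_pos ha0, div_lt_one ha0]
  have hgeom := ((hasSum_geometric_of_abs_lt_one hba).mul_left A).sub
    ((hasSum_geometric_of_lt_one (by positivity) ((div_lt_one ha0).mpr ha)).mul_left c)
  have hab : a - b ≠ 0 := by linarith [le_abs_self b]
  have hterm : (fun i => (A * b ^ i - c) / a ^ i) = fun i => A * (b / a) ^ i - c * (1 / a) ^ i := by
    ext i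
    rw [div_pow, div_pow, one_pow]
    field_simp
  rw [hterm, show A * a / (a - b) - c * a / (a - 1) = A * (1 - b / a)⁻¹ - c * (1 - 1 / a)⁻¹ by
    rw [one_sub_div ha0.ne', one_sub_div ha0.ne', inv_div, inv_div]
    ring]
  exact hgeom

theorem tendsto_sum_range_sum_range_affine_geometric {a b : ℝ} (A c d : ℝ) (ha : 1 < a)
    (hb : |b| < a) :
    Tendsto (fun n => ∑ i ∈ range n, ∑ j ∈ range (n - i),
        (A * b ^ i - c) * (a ^ (n - i - j) - 1) * (A * b ^ j - d) / a ^ n) atTop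
      (𝓝 ((A * a / (a - b) - c * a / (a - 1)) * (A * a / (a - b) - d * a / (a - 1)))) := by
  have hu := hasSum_mul_pow_sub_div_pow A c ha hb
  have hv := hasSum_mul_pow_sub_div_pow A d ha hb
  rw [← hu.tsum_eq, ← hv.tsum_eq]
  exact tendsto_sum_range_sum_range_mul_pow_sub_one_mul_div_pow
    (by rwa [Real.norm_of_nonneg (by linarith)]) (summable_norm_iff.mpr hu.summable)
    (summable_norm_iff.mpr hv.summable)

theorem stmt_13_general (n k : ℕ) (hn : 2 ≤ n) :
    Tendsto (fun p : ℕ =>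
        ((n : ℝ) - 1) / (n * (2 * n - 1) ^ (p : ℕ)) *
          ∑ x ∈ Finset.Icc 1 (p - 4), ∑ y ∈ Finset.Icc 1 (p - x - 3),
            4 * ((2 * (n : ℝ) - 2) * (2 * n - 3) ^ (x - 1) - 2 * ((k : ℝ) - 1)) *
              ((2 * (n : ℝ) - 1) ^ (p - x - y - 2) - 1) *
              ((2 * (n : ℝ) - 2) * (2 * n - 3) ^ (y - 1) - 2 * ((k : ℝ) - 1) - 1))
      atTop
      (nhds ((4 * ((n : ℝ) - 1) ^ 4 - (8 * k - 6) * ((n : ℝ) - 1) ^ 2 +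
          4 * k ^ 2 - 6 * k + 2) / (n * (n - 1) * (2 * n - 1) ^ 2))) := by
  have hN : (2 : ℝ) ≤ n := by exact_mod_cast hn
  have hn0 : (n : ℝ) ≠ 0 := by linarith
  have hn1 : (n : ℝ) - 1 ≠ 0 := by linarith
  have ha0 : (2 * n - 1 : ℝ) ≠ 0 := by linarith
  have hlim := (tendsto_sum_range_sum_range_affine_geometric (2 * n - 2) (2 * (k - 1))
    (2 * (k - 1) + 1) (by linarith : (1 : ℝ) < 2 * n - 1)
    (abs_lt.mpr ⟨by linarith, by linarith⟩ : |(2 * n - 3 : ℝ)| < 2 * n - 1)).const_mul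
    (4 * (n - 1) / (n * (2 * n - 1) ^ 4) : ℝ)
  rw [← tendsto_add_atTop_iff_nat 4]
  convert hlim using 1
  · funext m
    rw [show m + 4 - 4 = m by omega, sum_Icc_one_eq_sum_range, mul_sum, mul_sum]
    refine sum_congr rfl fun i _ => ?_
    rw [show m + 4 - (i + 1) - 3 = m - i by omega, sum_Icc_one_eq_sum_range, mul_sum, mul_sum]
    refine sum_congr rfl fun j _ => ?_
    rw [show m + 4 - (i + 1) - (j + 1) - 2 = m - i - j by omega, Nat.add_sub_cancel,
      Nat.add_sub_cancel, pow_add]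
    field_simp
    ring
  · rw [show (2 * n - 1 - (2 * n - 3) : ℝ) = 2 by ring,
      show (2 * n - 1 - 1 : ℝ) = 2 * (n - 1) by ring]
    congr 1
    field_simp
    ring

theorem stmt_13 (n k : ℕ) (hn : 2 ≤ n) (hk1 : 1 ≤ k) (hkn : k ≤ n) :
    Tendsto (fun p : ℕ =>
        ((n : ℝ) - 1) / (n * (2 * n - 1) ^ (p : ℕ)) *
          ∑ x ∈ Finset.Icc 1 (p - 4), ∑ y ∈ Finset.Icc 1 (p - x - 3),
            4 * ((2 * (n : ℝ) - 2) * (2 * n - 3) ^ (x - 1) - 2 * ((k : ℝ) - 1)) *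
              ((2 * (n : ℝ) - 1) ^ (p - x - y - 2) - 1) *
              ((2 * (n : ℝ) - 2) * (2 * n - 3) ^ (y - 1) - 2 * ((k : ℝ) - 1) - 1))
      atTop
      (nhds ((4 * ((n : ℝ) - 1) ^ 4 - (8 * k - 6) * ((n : ℝ) - 1) ^ 2 +
          4 * k ^ 2 - 6 * k + 2) / (n * (n - 1) * (2 * n - 1) ^ 2))) :=
  stmt_13_general n k hn
end

section
/- For d_n = ∏_{k=1}^{n} (4(n-1)^4 - (8k-6)(n-1)^2 + 4k^2 - 6k + 2)/(n(n-1)(2n-1)^2), we have d_2 = 0 and d_n > 0 for all n ≥ 3. -/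
open Finset

noncomputable def weckenLowerBound (n : ℕ) : ℝ :=
  ∏ k ∈ Finset.Icc 1 n,
    (4 * ((n : ℝ) - 1) ^ 4 - (8 * k - 6) * ((n : ℝ) - 1) ^ 2 +
        4 * (k : ℝ) ^ 2 - 6 * k + 2) / ((n : ℝ) * (n - 1) * (2 * n - 1) ^ 2)

theorem stmt_14 :
    weckenLowerBound 2 = 0 ∧ ∀ n : ℕ, 3 ≤ n → 0 < weckenLowerBound n := by
  constructor
  · apply Finset.prod_eq_zero (i := 2) (by decide)
    norm_num
  · intro n hn
    apply Finset.prod_pos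
    intro k hk
    obtain ⟨hk1, hk2⟩ := Finset.mem_Icc.mp hk
    have hn3 : (3:ℝ) ≤ n := by exact_mod_cast hn
    have hkn : (k:ℝ) ≤ n := by exact_mod_cast hk2
    have hk1' : (1:ℝ) ≤ k := by exact_mod_cast hk1
    have hA : 0 < 2*((n:ℝ)-1)^2 + 2 - 2*k := by nlinarith
    have hB : 0 < 2*((n:ℝ)-1)^2 + 1 - 2*k := by nlinarith
    apply div_pos
    · nlinarith [mul_pos hA hB]
    · nlinarith [sq_nonneg (2*(n:ℝ)-1)]
end
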